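/- Let n ≥ 2 with n+1 odd. Suppose P(t,x,y) factors as the product of the four Kippenhahn polynomials F_{B⁺}·F_{B₁⁻}·F_{B⁻}·F_{B₁⁺}, where B₁± is the top-left (n/2)×(n/2) principal submatrix of the (n/2+1)×(n/2+1) matrix B±. Then the convex set determined by the largest roots of P(·, −cosθ, −sinθ) (over θ ∈ [0,2π)) equals conv(W(B⁺) ∪ W(B⁻)). -/

import Mathlib

open Matrix

/-- The numerical range of a complex matrix: the set of values `⟨A x, x⟩ = x* A x`
over unit vectors `x`. -/
def nr {ι : Type*} [Fintype ι] (M : Matrix ι ι ℂ) : Set ℂ :=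
  {z | ∃ x : ι → ℂ, ∑ i, ‖x i‖ ^ 2 = 1 ∧ z = star x ⬝ᵥ M.mulVec x}

/-- The Hermitian real part `(M + M*) / 2` of a complex matrix. -/
noncomputable def reM {ι : Type*} (M : Matrix ι ι ℂ) : Matrix ι ι ℂ :=
  (2⁻¹ : ℂ) • (M + Mᴴ)

/-- The Hermitian imaginary part `(M - M*) / (2i)` of a complex matrix. -/
noncomputable def imM {ι : Type*} (M : Matrix ι ι ℂ) : Matrix ι ι ℂ :=
  (2 * Complex.I)⁻¹ • (M - Mᴴ)

/-- The Kippenhahn polynomial `F_M(t,x,y) = det(t·I + x·Re(M) + y·Im(M))`. -/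
noncomputable def kip {k : ℕ} (M : Matrix (Fin k) (Fin k) ℂ) (t x y : ℝ) : ℂ :=
  ((t : ℂ) • (1 : Matrix (Fin k) (Fin k) ℂ) + (x : ℂ) • reM M + (y : ℂ) • imM M).det

/-- The principal submatrix obtained by deleting the last row and column. -/
def subm {k : ℕ} (M : Matrix (Fin (k + 1)) (Fin (k + 1)) ℂ) : Matrix (Fin k) (Fin k) ℂ :=
  Matrix.of fun i j => M i.castSucc j.castSucc

/-!
For every direction `θ`, the roots of `F_M(·, -cos θ, -sin θ)` are the eigenvalues of the
Hermitian matrix `Re(e^{-iθ} M)`, whose quadratic form is `x ↦ Re(e^{-iθ} x* M x)`. So every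
root is a value of `Re(e^{-iθ} ·)` on `W(M)`, and the largest root bounds that functional on
`W(M)`. For the product `P`, the largest root therefore bounds `Re(e^{-iθ} ·)` on
`W(B⁺) ∪ W(B⁻)` and is attained there, the roots of the submatrix factors being attained on
`W(B₁±) ⊆ W(B±)`: it is the support function of `W(B⁺) ∪ W(B⁻)`. A compact set in the plane has a
compact convex hull (Carathéodory), which is the intersection of the half-planes cut out by its
support function.
-/

open ComplexConjugate

section HermitianPart

variable {ι : Type*}

lemma reM_isHermitian (M : Matrix ι ι ℂ) : (reM M).IsHermitian := by
  rw [Matrix.IsHermitian, reM, conjTranspose_smul, conjTranspose_add, conjTranspose_conjTranspose,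
    add_comm]
  simp

lemma star_dotProduct_reM_mulVec [Fintype ι] (M : Matrix ι ι ℂ) (x : ι → ℂ) :
    star x ⬝ᵥ reM M *ᵥ x = ((star x ⬝ᵥ M *ᵥ x).re : ℂ) := by
  have hconj : conj (star x ⬝ᵥ M *ᵥ x) = star x ⬝ᵥ Mᴴ *ᵥ x := by
    rw [← Complex.star_def, star_dotProduct, star_star, star_mulVec, ← dotProduct_mulVec]
  rw [reM, smul_mulVec, add_mulVec, dotProduct_smul, dotProduct_add, ← hconj, Complex.add_conj]
  simp

lemma reM_exp_smul (M : Matrix ι ι ℂ) (θ : ℝ) :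
    reM (Complex.exp (-θ * Complex.I) • M) =
      (Real.cos θ : ℂ) • reM M + (Real.sin θ : ℂ) • imM M := by
  have hexp : Complex.exp (-θ * Complex.I) = Real.cos θ - Real.sin θ * Complex.I := by
    rw [← Complex.ofReal_neg, Complex.exp_mul_I, ← Complex.ofReal_cos, ← Complex.ofReal_sin,
      Real.cos_neg, Real.sin_neg]
    push_cast
    ring
  ext i j
  simp only [reM, imM, conjTranspose_smul, Matrix.smul_apply, Matrix.add_apply, Matrix.sub_apply,
    smul_eq_mul, hexp, star_sub, star_mul', Complex.star_def, Complex.conj_ofReal, Complex.conj_I]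
  field_simp
  ring_nf
  rw [Complex.I_sq]
  ring

end HermitianPart

section Spectral

open scoped ComplexOrder

variable {𝕜 n : Type*} [RCLike 𝕜] [Fintype n]

lemma star_dotProduct_self_eq_sum_norm_sq (x : n → 𝕜) :
    star x ⬝ᵥ x = ((∑ i, ‖x i‖ ^ 2 : ℝ) : 𝕜) := by
  simp [dotProduct, RCLike.conj_mul]

variable [DecidableEq n] {A : Matrix n n 𝕜}

lemma Matrix.IsHermitian.det_smul_one_sub_eq_zero_iff (hA : A.IsHermitian) (s : ℝ) :
    ((s : 𝕜) • (1 : Matrix n n 𝕜) - A).det = 0 ↔ s ∈ Set.range hA.eigenvalues := by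
  rw [smul_one_eq_diagonal, ← scalar_apply, ← eval_charpoly, hA.charpoly_eq, Polynomial.eval_prod,
    Finset.prod_eq_zero_iff]
  simp only [Finset.mem_univ, true_and, Polynomial.eval_sub, Polynomial.eval_X,
    Polynomial.eval_C, sub_eq_zero, RCLike.ofReal_inj, Set.mem_range]
  exact exists_congr fun _ => eq_comm

lemma Matrix.IsHermitian.posSemidef_smul_one_sub (hA : A.IsHermitian) {r : ℝ}
    (hr : ∀ i, hA.eigenvalues i ≤ r) : ((r : 𝕜) • (1 : Matrix n n 𝕜) - A).PosSemidef := by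
  have hconj : (r : 𝕜) • (1 : Matrix n n 𝕜) - A = Unitary.conjStarAlgAut 𝕜 _ hA.eigenvectorUnitary
      (diagonal fun i => ((r - hA.eigenvalues i : ℝ) : 𝕜)) := by
    conv_lhs => rw [hA.spectral_theorem,
      ← map_one (Unitary.conjStarAlgAut 𝕜 _ hA.eigenvectorUnitary), ← map_smul, ← map_sub,
      smul_one_eq_diagonal, diagonal_sub]
    simp
  rw [hconj, Unitary.conjStarAlgAut_apply, Unitary.isUnit_coe.posSemidef_star_right_conjugate_iff, posSemidef_diagonal_iff]
  intro i
  simpa using hr i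

lemma Matrix.IsHermitian.re_star_dotProduct_mulVec_le (hA : A.IsHermitian) {r : ℝ}
    (hr : ∀ i, hA.eigenvalues i ≤ r) (x : n → 𝕜) :
    RCLike.re (star x ⬝ᵥ A *ᵥ x) ≤ r * ∑ i, ‖x i‖ ^ 2 := by
  have h := (hA.posSemidef_smul_one_sub hr).re_dotProduct_nonneg x
  rw [sub_mulVec, smul_mulVec, one_mulVec, dotProduct_sub, dotProduct_smul,
    star_dotProduct_self_eq_sum_norm_sq, map_sub, smul_eq_mul, ← RCLike.ofReal_mul,
    RCLike.ofReal_re] at h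
  linarith

lemma Matrix.IsHermitian.exists_star_dotProduct_mulVec_eq_eigenvalue (hA : A.IsHermitian) (i : n) :
    ∃ x : n → 𝕜, ∑ j, ‖x j‖ ^ 2 = 1 ∧ star x ⬝ᵥ A *ᵥ x = hA.eigenvalues i := by
  have hnorm : ∑ j, ‖hA.eigenvectorBasis i j‖ ^ 2 = 1 := by
    rw [← EuclideanSpace.norm_sq_eq, hA.eigenvectorBasis.orthonormal.1 i, one_pow]
  refine ⟨hA.eigenvectorBasis i, hnorm, ?_⟩
  rw [hA.mulVec_eigenvectorBasis, dotProduct_smul, star_dotProduct_self_eq_sum_norm_sq, hnorm]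
  simp [RCLike.real_smul_eq_coe_mul]

end Spectral

section NumericalRange

variable {ι : Type*} [Fintype ι]

lemma EuclideanSpace.sum_norm_sq_eq_one_iff {𝕜 : Type*} [RCLike 𝕜] (x : EuclideanSpace 𝕜 ι) :
    ∑ i, ‖x i‖ ^ 2 = 1 ↔ ‖x‖ = 1 := by
  rw [← EuclideanSpace.norm_sq_eq, pow_eq_one_iff_of_nonneg (norm_nonneg x) two_ne_zero]

lemma nr_eq_image_sphere (M : Matrix ι ι ℂ) :
    nr M = (fun x : EuclideanSpace ℂ ι => star ⇑x ⬝ᵥ M *ᵥ ⇑x) '' Metric.sphere 0 1 := by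
  ext z
  constructor
  · rintro ⟨x, hx, rfl⟩
    exact ⟨WithLp.toLp 2 x, by simpa [EuclideanSpace.sum_norm_sq_eq_one_iff] using hx, rfl⟩
  · rintro ⟨x, hx, rfl⟩
    exact ⟨x, by simpa [EuclideanSpace.sum_norm_sq_eq_one_iff] using hx, rfl⟩

lemma isCompact_nr (M : Matrix ι ι ℂ) : IsCompact (nr M) := by
  rw [nr_eq_image_sphere]
  exact (isCompact_sphere 0 1).image (by fun_prop)

lemma nr_subm_subset {k : ℕ} (M : Matrix (Fin (k + 1)) (Fin (k + 1)) ℂ) : nr (subm M) ⊆ nr M := by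
  rintro _ ⟨x, hx, rfl⟩
  refine ⟨Fin.snoc x 0, by simpa [Fin.sum_univ_castSucc] using hx, ?_⟩
  simp [dotProduct, mulVec, Fin.sum_univ_castSucc, subm]

end NumericalRange

section Kippenhahn

variable {k : ℕ} (M : Matrix (Fin k) (Fin k) ℂ) (θ : ℝ)

lemma kip_neg_cos_neg_sin (s : ℝ) :
    kip M s (-Real.cos θ) (-Real.sin θ) =
      ((s : ℂ) • (1 : Matrix (Fin k) (Fin k) ℂ) - reM (Complex.exp (-θ * Complex.I) • M)).det := by
  rw [kip, reM_exp_smul]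
  congr 1
  push_cast
  module

lemma kip_neg_cos_neg_sin_eq_zero_iff (s : ℝ) :
    kip M s (-Real.cos θ) (-Real.sin θ) = 0 ↔
      s ∈ Set.range (reM_isHermitian (Complex.exp (-θ * Complex.I) • M)).eigenvalues := by
  rw [kip_neg_cos_neg_sin]
  exact (reM_isHermitian _).det_smul_one_sub_eq_zero_iff s

lemma finite_setOf_kip_neg_cos_neg_sin_eq_zero :
    {s : ℝ | kip M s (-Real.cos θ) (-Real.sin θ) = 0}.Finite :=
  (Set.finite_range _).subset fun s hs => (kip_neg_cos_neg_sin_eq_zero_iff M θ s).1 hs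

lemma star_dotProduct_reM_exp_smul_mulVec (x : Fin k → ℂ) :
    star x ⬝ᵥ reM (Complex.exp (-θ * Complex.I) • M) *ᵥ x =
      ((Complex.exp (-θ * Complex.I) * (star x ⬝ᵥ M *ᵥ x)).re : ℂ) := by
  rw [star_dotProduct_reM_mulVec, smul_mulVec, dotProduct_smul, smul_eq_mul]

variable {M θ}

lemma exists_mem_nr_re_exp_mul_eq {s : ℝ} (hs : kip M s (-Real.cos θ) (-Real.sin θ) = 0) :
    ∃ z ∈ nr M, (Complex.exp (-θ * Complex.I) * z).re = s := by
  obtain ⟨i, rfl⟩ := (kip_neg_cos_neg_sin_eq_zero_iff M θ s).1 hs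
  obtain ⟨x, hx, hxA⟩ := (reM_isHermitian _).exists_star_dotProduct_mulVec_eq_eigenvalue i
  refine ⟨_, ⟨x, hx, rfl⟩, ?_⟩
  exact Complex.ofReal_injective ((star_dotProduct_reM_exp_smul_mulVec M θ x).symm.trans hxA)

lemma exists_kip_eq_zero_re_exp_mul_le {z : ℂ} (hz : z ∈ nr M) :
    ∃ s, kip M s (-Real.cos θ) (-Real.sin θ) = 0 ∧ (Complex.exp (-θ * Complex.I) * z).re ≤ s := by
  obtain ⟨x, hx, rfl⟩ := hz
  have hA := reM_isHermitian (Complex.exp (-θ * Complex.I) • M)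
  have : Nonempty (Fin k) := by
    rcases isEmpty_or_nonempty (Fin k) with h | h
    · simp at hx
    · exact h
  obtain ⟨i, -, hi⟩ := Finset.univ.exists_max_image hA.eigenvalues Finset.univ_nonempty
  refine ⟨hA.eigenvalues i, (kip_neg_cos_neg_sin_eq_zero_iff M θ _).2 ⟨i, rfl⟩, ?_⟩
  have := hA.re_star_dotProduct_mulVec_le (fun j => hi j (Finset.mem_univ j)) x
  rwa [star_dotProduct_reM_exp_smul_mulVec, hx, mul_one, RCLike.re_to_complex,
    Complex.ofReal_re] at this

end Kippenhahn

open Function in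
lemma IsCompact.convexHull {E : Type*} [NormedAddCommGroup E] [NormedSpace ℝ E]
    [FiniteDimensional ℝ E] {s : Set E} (hs : IsCompact s) : IsCompact (convexHull ℝ s) := by
  rcases s.eq_empty_or_nonempty with rfl | ⟨p, hp⟩
  · simp
  set N := Module.finrank ℝ E + 1
  -- Carathéodory: every point of the hull is a convex combination of at most `N` points of `s`.
  have hN : _root_.convexHull ℝ s = (fun q : (Fin N → ℝ) × (Fin N → E) => ∑ i, q.1 i • q.2 i) ''
      (stdSimplex ℝ (Fin N) ×ˢ Set.univ.pi fun _ => s) := by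
    refine Set.Subset.antisymm ?_ ?_
    · intro x hx
      obtain ⟨ι, _, z, w, hzs, hai, hw0, hw1, rfl⟩ := eq_pos_convex_span_of_mem_convexHull hx
      obtain ⟨e⟩ : Nonempty (ι ↪ Fin N) := Embedding.nonempty_of_card_le <| by
        simpa [N] using hai.card_le_finrank_succ.trans
          (Nat.succ_le_succ (Submodule.finrank_le (vectorSpan ℝ (Set.range z))))
      refine ⟨(extend e w 0, extend e z fun _ => p), ⟨⟨fun j => ?_, ?_⟩, fun j _ => ?_⟩, ?_⟩
      · change 0 ≤ extend e w 0 j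
        rcases Set.range_extend_subset e w 0 ⟨j, rfl⟩ with ⟨i, hi⟩ | ⟨_, _, hi⟩ <;> rw [← hi]
        exacts [(hw0 i).le, le_rfl]
      · rw [← hw1]
        refine (Fintype.sum_of_injective e e.injective _ _ (fun j hj => ?_) fun i => ?_).symm
        exacts [extend_apply' _ _ _ hj, (e.injective.extend_apply _ _ _).symm]
      · change extend e z (fun _ => p) j ∈ s
        rcases Set.range_extend_subset e z (fun _ => p) ⟨j, rfl⟩ with ⟨i, hi⟩ | ⟨_, _, hi⟩ <;>
          rw [← hi]
        exacts [hzs ⟨i, rfl⟩, hp]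
      · refine (Fintype.sum_of_injective e e.injective _ _ (fun j hj => ?_) fun i => ?_).symm
        · simp [extend_apply' _ _ _ hj]
        · simp [e.injective.extend_apply]
    · rintro _ ⟨⟨w, z⟩, ⟨⟨hw0, hw1⟩, hz⟩, rfl⟩
      exact (convex_convexHull ℝ s).sum_mem (fun i _ => hw0 i) hw1
        fun i _ => subset_convexHull ℝ s (hz i (Set.mem_univ i))
  rw [hN]
  exact ((isCompact_stdSimplex _ _).prod (isCompact_univ_pi fun _ => hs)).image (by fun_prop)

lemma Complex.exists_mem_Ico_eq_norm_mul_exp_neg (a : ℂ) :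
    ∃ θ : ℝ, θ ∈ Set.Ico 0 (2 * Real.pi) ∧ a = ‖a‖ * Complex.exp (-θ * Complex.I) := by
  set θ := toIcoMod Real.two_pi_pos 0 (-a.arg)
  have hθ : ((-a.arg - θ : ℝ) : ℂ) = (toIcoDiv Real.two_pi_pos 0 (-a.arg) * (2 * Real.pi) : ℝ) :=
    congrArg _ (self_sub_toIcoMod_eq_mul Real.two_pi_pos 0 (-a.arg))
  push_cast at hθ
  refine ⟨θ, by simpa using toIcoMod_mem_Ico' Real.two_pi_pos (-a.arg), ?_⟩
  rw [Complex.exp_eq_exp_iff_exists_int.2 ⟨toIcoDiv Real.two_pi_pos 0 (-a.arg), ?_⟩,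
    Complex.norm_mul_exp_arg_mul_I]
  linear_combination Complex.I * hθ

lemma setOf_forall_re_exp_mul_le_eq_convexHull {s : Set ℂ} (hs : IsCompact s) {h : ℝ → ℝ}
    (hh : ∀ θ : ℝ, IsGreatest ((fun w => (Complex.exp (-θ * Complex.I) * w).re) '' s) (h θ)) :
    {z : ℂ | ∀ θ ∈ Set.Ico (0 : ℝ) (2 * Real.pi), (Complex.exp (-θ * Complex.I) * z).re ≤ h θ} =
      convexHull ℝ s := by
  refine Set.Subset.antisymm (fun z hz => ?_) fun z hz θ _ => ?_
  · rw [← RCLike.iInter_halfSpaces_eq' (𝕜 := ℂ) (convex_convexHull ℝ s) hs.convexHull.isClosed]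
    simp only [Set.mem_iInter]
    intro l c hc
    obtain ⟨θ, hθ, hl1⟩ := (l 1).exists_mem_Ico_eq_norm_mul_exp_neg
    obtain ⟨w, hw, hwθ⟩ := (hh θ).1
    set r := ‖l 1‖
    have hl : ∀ y, RCLike.re (l y) = r * (Complex.exp (-θ * Complex.I) * y).re := by
      intro y
      rw [show l y = y * l 1 by rw [← smul_eq_mul, ← map_smul, smul_eq_mul, mul_one], hl1,
        mul_left_comm, RCLike.re_to_complex, Complex.re_ofReal_mul, mul_comm y]
    calc RCLike.re (l z) = r * (Complex.exp (-θ * Complex.I) * z).re := hl z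
      _ ≤ r * h θ := by gcongr; exact hz θ hθ
      _ = RCLike.re (l w) := by rw [hl, ← hwθ]
      _ ≤ c := hc w (subset_convexHull ℝ s hw)
  · have hlin : IsLinearMap ℝ fun w : ℂ => (Complex.exp (-θ * Complex.I) * w).re :=
      ⟨fun x y => by simp [mul_add], fun r x => by simp [mul_left_comm]⟩
    exact convexHull_min (fun w hw => (hh θ).2 ⟨w, hw, rfl⟩) (convex_halfSpace_le hlin (h θ)) hz

lemma isGreatest_sSup_setOf_eq_zero {m : ℕ} (Bp Bm : Matrix (Fin (m + 1)) (Fin (m + 1)) ℂ)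
    (P : ℝ → ℝ → ℝ → ℂ)
    (hP : ∀ t x y : ℝ, P t x y =
      kip Bp t x y * kip (subm Bm) t x y * kip Bm t x y * kip (subm Bp) t x y) (θ : ℝ) :
    IsGreatest ((fun w => (Complex.exp (-θ * Complex.I) * w).re) '' (nr Bp ∪ nr Bm))
      (sSup {s : ℝ | P s (-Real.cos θ) (-Real.sin θ) = 0}) := by
  set S := {s : ℝ | P s (-Real.cos θ) (-Real.sin θ) = 0}
  have hS : ∀ s, s ∈ S ↔ kip Bp s (-Real.cos θ) (-Real.sin θ) = 0 ∨
      kip (subm Bm) s (-Real.cos θ) (-Real.sin θ) = 0 ∨ kip Bm s (-Real.cos θ) (-Real.sin θ) = 0 ∨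
      kip (subm Bp) s (-Real.cos θ) (-Real.sin θ) = 0 := by
    simp [S, hP, or_assoc]
  have hfin : S.Finite := by
    simp only [S, hP, mul_eq_zero, Set.ofPred_or]
    exact (((finite_setOf_kip_neg_cos_neg_sin_eq_zero _ θ).union
      (finite_setOf_kip_neg_cos_neg_sin_eq_zero _ θ)).union
      (finite_setOf_kip_neg_cos_neg_sin_eq_zero _ θ)).union
      (finite_setOf_kip_neg_cos_neg_sin_eq_zero _ θ)
  have hne : S.Nonempty :=
    ⟨_, (hS _).2 (.inl ((kip_neg_cos_neg_sin_eq_zero_iff Bp θ _).2 ⟨0, rfl⟩))⟩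
  constructor
  · rcases (hS _).1 (hne.csSup_mem hfin) with h | h | h | h <;>
      obtain ⟨w, hw, hwθ⟩ := exists_mem_nr_re_exp_mul_eq h
    exacts [⟨w, .inl hw, hwθ⟩, ⟨w, .inr (nr_subm_subset Bm hw), hwθ⟩, ⟨w, .inr hw, hwθ⟩,
      ⟨w, .inl (nr_subm_subset Bp hw), hwθ⟩]
  · rintro _ ⟨w, hw | hw, rfl⟩ <;> obtain ⟨s, hs, hle⟩ := exists_kip_eq_zero_re_exp_mul_le hw
    exacts [hle.trans (le_csSup hfin.bddAbove ((hS s).2 (.inl hs))),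
      hle.trans (le_csSup hfin.bddAbove ((hS s).2 (.inr (.inr (.inl hs)))))]

theorem stmt_18_general (m : ℕ)
    (Bp Bm : Matrix (Fin (m + 1)) (Fin (m + 1)) ℂ)
    (P : ℝ → ℝ → ℝ → ℂ)
    (hP : ∀ t x y : ℝ, P t x y =
      kip Bp t x y * kip (subm Bm) t x y * kip Bm t x y * kip (subm Bp) t x y) :
    {z : ℂ | ∀ θ ∈ Set.Ico (0 : ℝ) (2 * Real.pi),
        (Complex.exp (-(θ : ℂ) * Complex.I) * z).re ≤
          sSup {s : ℝ | P s (-Real.cos θ) (-Real.sin θ) = 0}} =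
      convexHull ℝ (nr Bp ∪ nr Bm) :=
  setOf_forall_re_exp_mul_le_eq_convexHull ((isCompact_nr Bp).union (isCompact_nr Bm))
    (isGreatest_sSup_setOf_eq_zero Bp Bm P hP)

/-- If `P(t,x,y)` factors as the product of the four Kippenhahn polynomials
`F_{B⁺}·F_{B₁⁻}·F_{B⁻}·F_{B₁⁺}`, where `B₁±` is the principal submatrix of `B±` obtained
by deleting the last row and column, then the convex set determined by the largest roots
of `P(·, -cos θ, -sin θ)` over `θ ∈ [0, 2π)` equals `conv(W(B⁺) ∪ W(B⁻))`. -/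
theorem stmt_18 (m : ℕ) (hm : 1 ≤ m)
    (Bp Bm : Matrix (Fin (m + 1)) (Fin (m + 1)) ℂ)
    (P : ℝ → ℝ → ℝ → ℂ)
    (hP : ∀ t x y : ℝ, P t x y =
      kip Bp t x y * kip (subm Bm) t x y * kip Bm t x y * kip (subm Bp) t x y) :
    {z : ℂ | ∀ θ ∈ Set.Ico (0 : ℝ) (2 * Real.pi),
        (Complex.exp (-(θ : ℂ) * Complex.I) * z).re ≤
          sSup {s : ℝ | P s (-Real.cos θ) (-Real.sin θ) = 0}} =
      convexHull ℝ (nr Bp ∪ nr Bm) :=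
  stmt_18_general m Bp Bm P hP
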